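/- In the setup (G centerless, f, h : G → Aut(G) with h(σ) = conj(g(σ))∘f(σ), g a bijection satisfying g(στ) = g(σ)·f(σ)(g(τ)), and N = {ρ(g(σ))∘f(σ) : σ ∈ G} a normal subgroup of Hol(G)), there are group isomorphisms G/ker(h) ≅ G/g(ker(h)), G/ker(f) ≅ G/g(ker(f)), and G/(ker(f)·ker(h)) ≅ G/(g(ker(f))·g(ker(h))). -/

import Mathlib

/-- The left regular representation `λ : G →* Perm G`, `λ(σ)(x) = σ·x`. -/
def lambda (G : Type*) [Group G] : G →* Equiv.Perm G where
  toFun σ := Equiv.mulLeft σ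
  map_one' := by ext x; simp
  map_mul' σ τ := by ext x; simp [mul_assoc]

/-- The right regular representation `ρ : G →* Perm G`, `ρ(σ)(x) = x·σ⁻¹`. -/
def rho (G : Type*) [Group G] : G →* Equiv.Perm G where
  toFun σ := Equiv.mulRight σ⁻¹
  map_one' := by ext x; simp
  map_mul' σ τ := by ext x; simp [mul_assoc]

/-- The holomorph `Hol(G)`: the normalizer of `λ(G)` in `Perm G`. -/
def Hol (G : Type*) [Group G] : Subgroup (Equiv.Perm G) :=
  Subgroup.normalizer ((lambda G).range : Set (Equiv.Perm G))

/-! Conjugating `ρ(g σ) ∘ f σ ∈ N` by an automorphism `α ∈ Hol(G)` gives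
`ρ(α (g σ)) ∘ (α * f σ * α⁻¹)`, which lies in `N` again; since the factorisation `ρ(a) ∘ β` is
unique, this says that `f ∘ g⁻¹` is equivariant for the conjugation action of `Aut(G)`.
Together with the cocycle identity for `g`, equivariance makes `x ↦ (f (g⁻¹ x))⁻¹` a
homomorphism `G →* Aut(G)` with the same image as `f`, kernel `g(ker f)`, and mapping `g(ker h)`
onto `f(ker h)`. The identity `g(στ) = h(σ)(g τ) · g(σ)` shows that `(h, σ ↦ (g σ)⁻¹)` satisfies
the same hypotheses as `(f, g)`, which yields a homomorphism with the image of `h` and kernel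
`g(ker h)`. Each quotient is then a subquotient of `Aut(G)`: `G/ker f ≅ f(G)`, `G/ker h ≅ h(G)`
and `G/(ker f · ker h) ≅ f(G)/f(ker h)`. -/

open QuotientGroup

theorem Subgroup.Normal.map_subgroupOf_range {G M : Type*} [Group G] [Group M] {A : Subgroup G}
    (hA : A.Normal) (φ : G →* M) : ((A.map φ).subgroupOf φ.range).Normal := by
  have : (A.map φ).subgroupOf φ.range = A.map φ.rangeRestrict := by
    ext ⟨y, _⟩
    simp [Subgroup.mem_subgroupOf, Subtype.ext_iff]
  rw [this]
  exact hA.map _ φ.rangeRestrict_surjective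

namespace MonoidHom

variable {G₁ G₂ M : Type*} [Group G₁] [Group G₂] [Group M]

noncomputable def quotientSupKerMulEquiv (φ : G₁ →* M) (A : Subgroup G₁) [A.Normal]
    {R : Subgroup M} (hR : φ.range = R) {C : Subgroup M} (hC : A.map φ = C)
    [(C.subgroupOf R).Normal] : G₁ ⧸ (φ.ker ⊔ A) ≃* R ⧸ C.subgroupOf R :=
  let π : G₁ →* R ⧸ C.subgroupOf R :=
    (QuotientGroup.mk' _).comp (φ.codRestrict R fun x ↦ hR ▸ ⟨x, rfl⟩)
  have hπ : Function.Surjective π := by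
    rintro ⟨⟨y, hy⟩⟩
    obtain ⟨x, rfl⟩ := hR ▸ hy
    exact ⟨x, rfl⟩
  have hker : φ.ker ⊔ A = π.ker := by
    ext x
    simp [π, Subgroup.mem_subgroupOf, ← hC, ← Subgroup.mem_comap, Subgroup.comap_map_eq, sup_comm]
  (quotientMulEquivOfEq hker).trans (quotientKerEquivOfSurjective π hπ)

theorem nonempty_quotientKer_mulEquiv_of_range_eq (φ : G₁ →* M) (ψ : G₂ →* M)
    (hrange : φ.range = ψ.range) : Nonempty (G₁ ⧸ φ.ker ≃* G₂ ⧸ ψ.ker) :=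
  ⟨(quotientKerEquivRange φ).trans
    ((MulEquiv.subgroupCongr hrange).trans (quotientKerEquivRange ψ).symm)⟩

theorem nonempty_quotientSupKer_mulEquiv_of_range_eq (φ : G₁ →* M) (ψ : G₂ →* M)
    (A : Subgroup G₁) (B : Subgroup G₂) [A.Normal] [hB : B.Normal]
    (hrange : φ.range = ψ.range) (hmap : A.map φ = B.map ψ) :
    Nonempty (G₁ ⧸ (φ.ker ⊔ A) ≃* G₂ ⧸ (ψ.ker ⊔ B)) :=
  have := hB.map_subgroupOf_range ψ
  ⟨(quotientSupKerMulEquiv φ A hrange hmap).trans (quotientSupKerMulEquiv ψ B rfl rfl).symm⟩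

end MonoidHom

section IsConjEquivariant

variable {G : Type*} [Group G]

def IsConjEquivariant (k : G → MulAut G) : Prop :=
  ∀ (α : MulAut G) (x : G), k (α x) = α * k x * α⁻¹

theorem IsConjEquivariant.conj_mul {k : G → MulAut G} (hk : IsConjEquivariant k) :
    IsConjEquivariant fun x ↦ MulAut.conj x * k x := by
  intro α x
  have hconj : MulAut.conj (α x) = α * MulAut.conj x * α⁻¹ := by
    ext y
    simp [map_mul]
  simp only [hconj, hk α x]
  group

theorem IsConjEquivariant.comp_inv {k : G → MulAut G} (hk : IsConjEquivariant k) :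
    IsConjEquivariant fun x ↦ k x⁻¹ := by
  intro α x
  simp only [← map_inv, hk α]

end IsConjEquivariant

section Holomorph

variable {G : Type*} [Group G]

theorem MulAut.toPerm_mul_lambda_mul_inv (α : MulAut G) (a : G) :
    MulAut.toPerm G α * lambda G a * (MulAut.toPerm G α)⁻¹ = lambda G (α a) := by
  ext x
  show α (a * α⁻¹ x) = α a * x
  rw [map_mul, MulAut.apply_inv_self]

theorem MulAut.toPerm_mem_Hol (α : MulAut G) : MulAut.toPerm G α ∈ Hol G := by
  refine Subgroup.mem_normalizer_iff.mpr fun p ↦ ⟨?_, ?_⟩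
  · rintro ⟨a, rfl⟩
    exact ⟨α a, (α.toPerm_mul_lambda_mul_inv a).symm⟩
  · rintro ⟨a, ha⟩
    refine ⟨α⁻¹ a, ?_⟩
    rw [← α⁻¹.toPerm_mul_lambda_mul_inv, ha, map_inv, inv_inv]
    group

theorem MulAut.toPerm_mul_rho_mul_inv (α β : MulAut G) (a : G) :
    MulAut.toPerm G α * (rho G a * MulAut.toPerm G β) * (MulAut.toPerm G α)⁻¹
      = rho G (α a) * MulAut.toPerm G (α * β * α⁻¹) := by
  ext x
  show α (β (α⁻¹ x) * a⁻¹) = α (β (α⁻¹ x)) * (α a)⁻¹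
  rw [map_mul, map_inv]

theorem rho_mul_toPerm_inj {a b : G} {α β : MulAut G} :
    rho G a * MulAut.toPerm G α = rho G b * MulAut.toPerm G β ↔ a = b ∧ α = β := by
  refine ⟨fun h ↦ ?_, fun ⟨rfl, rfl⟩ ↦ rfl⟩
  have happ (x : G) : α x * a⁻¹ = β x * b⁻¹ := congrArg (· x) h
  have hab : a = b := by simpa using happ 1
  subst hab
  exact ⟨rfl, MulEquiv.ext fun x ↦ mul_right_cancel (happ x)⟩

theorem isConjEquivariant_of_normal (f : G →* MulAut G) (g : Equiv.Perm G)
    (N : Subgroup (Equiv.Perm G))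
    (hN : (N : Set (Equiv.Perm G))
      = {q | ∃ σ : G, q = rho G (g σ) * MulAut.toPerm G (f σ)})
    (hNnorm : ∀ x ∈ Hol G, ∀ n ∈ N, x * n * x⁻¹ ∈ N) :
    IsConjEquivariant (f ∘ g.symm) := by
  intro α x
  have hmem : rho G x * MulAut.toPerm G (f (g.symm x)) ∈ N := by
    rw [← SetLike.mem_coe, hN]
    exact ⟨g.symm x, by rw [Equiv.apply_symm_apply]⟩
  have hconj := hNnorm _ α.toPerm_mem_Hol _ hmem
  rw [← SetLike.mem_coe, hN, MulAut.toPerm_mul_rho_mul_inv] at hconj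
  obtain ⟨τ, hτ⟩ := hconj
  obtain ⟨hgτ, hfτ⟩ := rho_mul_toPerm_inj.mp hτ.symm
  rw [Function.comp_apply, Function.comp_apply, ← hfτ, ← hgτ, Equiv.symm_apply_apply]

end Holomorph

namespace MonoidHom

variable {G : Type*} [Group G] (f : G →* MulAut G) (g : Equiv.Perm G)

theorem symm_mul_eq_of_rel (hrel : ∀ σ τ : G, g (σ * τ) = g σ * f σ (g τ)) (x y : G) :
    g.symm (x * y) = g.symm x * g.symm ((f (g.symm x))⁻¹ y) := by
  apply g.injective
  rw [hrel, Equiv.apply_symm_apply, Equiv.apply_symm_apply, Equiv.apply_symm_apply,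
    MulAut.apply_inv_self]

def invCompSymm (hrel : ∀ σ τ : G, g (σ * τ) = g σ * f σ (g τ))
    (hf : IsConjEquivariant (f ∘ g.symm)) : G →* MulAut G :=
  MonoidHom.mk' (fun x ↦ (f (g.symm x))⁻¹) fun x y ↦ by
    have := hf (f (g.symm x))⁻¹ y
    simp only [Function.comp_apply] at this
    rw [symm_mul_eq_of_rel f g hrel, map_mul, this]
    group

variable {f g} (hrel : ∀ σ τ : G, g (σ * τ) = g σ * f σ (g τ))
  (hf : IsConjEquivariant (f ∘ g.symm))

@[simp] theorem invCompSymm_apply (σ : G) : f.invCompSymm g hrel hf (g σ) = (f σ)⁻¹ := by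
  simp [invCompSymm]

theorem map_invCompSymm {S K : Subgroup G} (hK : (K : Set G) = g '' S) :
    K.map (f.invCompSymm g hrel hf) = S.map f := by
  apply SetLike.coe_injective
  have hcomp : (f.invCompSymm g hrel hf) ∘ g = f ∘ Inv.inv := by
    ext1 σ
    simp
  rw [Subgroup.coe_map, Subgroup.coe_map, hK, Set.image_image, ← Function.comp_def, hcomp,
    Set.image_comp, Set.image_inv_eq_inv, inv_coe_set]

theorem range_invCompSymm : (f.invCompSymm g hrel hf).range = f.range := by
  rw [range_eq_map, range_eq_map, map_invCompSymm hrel hf]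
  simp [Set.image_univ_of_surjective g.surjective]

theorem ker_invCompSymm {K : Subgroup G} (hK : (K : Set G) = g '' f.ker) :
    (f.invCompSymm g hrel hf).ker = K := by
  apply SetLike.coe_injective
  ext x
  rw [hK, Set.mem_image_equiv]
  simp [invCompSymm]

end MonoidHom

section ConjMul

variable {G : Type*} [Group G] {f h : G →* MulAut G} {g : Equiv.Perm G}

theorem rel_trans_inv_of_conj_mul (hrel : ∀ σ τ : G, g (σ * τ) = g σ * f σ (g τ))
    (hh : ∀ σ : G, h σ = MulAut.conj (g σ) * f σ) (σ τ : G) :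
    (g.trans (Equiv.inv G)) (σ * τ)
      = (g.trans (Equiv.inv G)) σ * h σ ((g.trans (Equiv.inv G)) τ) := by
  simp [hrel, hh, mul_assoc]

theorem isConjEquivariant_trans_inv_of_conj_mul (hh : ∀ σ : G, h σ = MulAut.conj (g σ) * f σ)
    (hf : IsConjEquivariant (f ∘ g.symm)) :
    IsConjEquivariant (h ∘ (g.trans (Equiv.inv G)).symm) := by
  have : h ∘ (g.trans (Equiv.inv G)).symm = fun x ↦ MulAut.conj x⁻¹ * (f ∘ g.symm) x⁻¹ := by
    ext1 x
    simp [hh]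
  rw [this]
  exact hf.conj_mul.comp_inv

end ConjMul

theorem quotients_isomorphic_general
    (G : Type*) [Group G]
    (f h : G →* MulAut G) (g : Equiv.Perm G)
    (hrel : ∀ σ τ : G, g (σ * τ) = g σ * (f σ) (g τ))
    (hh : ∀ σ : G, h σ = MulAut.conj (g σ) * f σ)
    (N : Subgroup (Equiv.Perm G))
    (hN : (N : Set (Equiv.Perm G))
      = {q | ∃ σ : G, q = rho G (g σ) * MulAut.toPerm G (f σ)})
    (hNnorm : ∀ x ∈ Hol G, ∀ n ∈ N, x * n * x⁻¹ ∈ N)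
    (Kf Kh : Subgroup G) [Kf.Normal] [Kh.Normal]
    (hKf : (Kf : Set G) = ⇑g '' (f.ker : Set G))
    (hKh : (Kh : Set G) = ⇑g '' (h.ker : Set G))
    :
    Nonempty ((G ⧸ h.ker) ≃* (G ⧸ Kh)) ∧
      Nonempty ((G ⧸ f.ker) ≃* (G ⧸ Kf)) ∧
      Nonempty ((G ⧸ (f.ker ⊔ h.ker)) ≃* (G ⧸ (Kf ⊔ Kh))) := by
  have hf := isConjEquivariant_of_normal f g N hN hNnorm
  have hrel' := rel_trans_inv_of_conj_mul hrel hh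
  have hh' := isConjEquivariant_trans_inv_of_conj_mul hh hf
  have hKh' : (Kh : Set G) = g.trans (Equiv.inv G) '' h.ker := by
    rw [Equiv.coe_trans, Set.image_comp, ← hKh]
    simp
  have hker_f := f.ker_invCompSymm hrel hf hKf
  have hker_h := h.ker_invCompSymm hrel' hh' hKh'
  subst hker_f hker_h
  exact ⟨h.nonempty_quotientKer_mulEquiv_of_range_eq _ (h.range_invCompSymm hrel' hh').symm,
    f.nonempty_quotientKer_mulEquiv_of_range_eq _ (f.range_invCompSymm hrel hf).symm,
    f.nonempty_quotientSupKer_mulEquiv_of_range_eq _ _ _ (f.range_invCompSymm hrel hf).symm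
      (f.map_invCompSymm hrel hf hKh).symm⟩

/-- In the setup, with `Kf = g(ker f)` and `Kh = g(ker h)` (which are
normal, indeed characteristic, subgroups of `G`), there are group isomorphisms
`G/ker(h) ≅ G/g(ker h)`, `G/ker(f) ≅ G/g(ker f)`, and
`G/(ker(f)·ker(h)) ≅ G/(g(ker f)·g(ker h))`. -/
theorem quotients_isomorphic
    (G : Type*) [Group G] (hZ : Subgroup.center G = ⊥)
    (f h : G →* MulAut G) (g : Equiv.Perm G) (hg1 : g 1 = 1)
    (hrel : ∀ σ τ : G, g (σ * τ) = g σ * (f σ) (g τ))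
    (hh : ∀ σ : G, h σ = MulAut.conj (g σ) * f σ)
    (N : Subgroup (Equiv.Perm G))
    (hN : (N : Set (Equiv.Perm G))
      = {q | ∃ σ : G, q = rho G (g σ) * MulAut.toPerm G (f σ)})
    (hNle : N ≤ Hol G)
    (hNnorm : ∀ x ∈ Hol G, ∀ n ∈ N, x * n * x⁻¹ ∈ N)
    (Kf Kh : Subgroup G) [Kf.Normal] [Kh.Normal]
    (hKf : (Kf : Set G) = ⇑g '' (f.ker : Set G))
    (hKh : (Kh : Set G) = ⇑g '' (h.ker : Set G))
    :
    Nonempty ((G ⧸ h.ker) ≃* (G ⧸ Kh)) ∧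
      Nonempty ((G ⧸ f.ker) ≃* (G ⧸ Kf)) ∧
      Nonempty ((G ⧸ (f.ker ⊔ h.ker)) ≃* (G ⧸ (Kf ⊔ Kh))) :=
  quotients_isomorphic_general G f h g hrel hh N hN hNnorm Kf Kh hKf hKh
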